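/- Suppose S is a real skew-symmetric (1+m)×(1+m) matrix, decomposed as S = [[0, ℓ],[−ℓ^T, −M]] with M = −M^T, and suppose (S ⊗ I_n) L_R = M_R for all real n×n matrices R, where L_R = [R; (P⊗R)C] and M_R = [RB; −(P⊗RA)C]. Then with f(z) = ℓ(zI_m − M)^{-1}ℓ^T one has f(A) = B, i.e., B = (ℓ⊗I_n)(I_m⊗A − M⊗I_n)^{-1}(ℓ^T⊗I_n). -/

import Mathlib

/-!
Evaluating the hypothesis at `R = 1` and reading off its two block rows gives, with
`D = (P ⊗ I) C`, the identities `(ℓ ⊗ I) D = B` and `(I ⊗ A - M ⊗ I) D = ℓᵀ ⊗ I`, so the formula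
holds as soon as `K = I ⊗ A - M ⊗ I` is invertible. A kernel vector of `K` is `vec X` with
`A X = X Mᵀ`, and such a Sylvester equation forces `X = 0` when `A` and `Mᵀ` have disjoint complex
spectra: `charpoly Mᵀ` annihilates the right-hand side and, by spectral mapping, is invertible at
`A`. The spectra are indeed disjoint, because the skew-symmetric `Mᵀ` has its spectrum on the
imaginary axis, and Lyapunov regularity (with `ν = μ`) keeps the spectrum of `A` off that axis.
-/

open Matrix Kronecker Polynomial

namespace Matrix

variable {m n : Type*} [Fintype m] [Fintype n] [DecidableEq m] [DecidableEq n]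

theorem kronecker_one_mul_apply {ι κ o R : Type*} [Fintype κ] [Semiring R] (S : Matrix ι κ R)
    (D : Matrix (κ × n) o R) (i : ι) (x : n) (y : o) :
    (S ⊗ₖ (1 : Matrix n n R) * D) (i, x) y = ∑ j, S i j * D (j, x) y := by
  simp [mul_apply, Fintype.sum_prod_type, one_apply]

omit [DecidableEq n] in
theorem one_kronecker_mul_apply {κ o R : Type*} [Fintype κ] [DecidableEq κ] [Semiring R]
    (A : Matrix n n R) (D : Matrix (κ × n) o R) (k : κ) (x : n) (y : o) :
    ((1 : Matrix κ κ R) ⊗ₖ A * D) (k, x) y = ∑ z, A x z * D (k, z) y := by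
  simp [mul_apply, Fintype.sum_prod_type, one_apply]

theorem re_eq_zero_of_mem_spectrum_of_transpose_eq_neg {M : Matrix m m ℝ} (hM : Mᵀ = -M)
    {μ : ℂ} (hμ : μ ∈ spectrum ℂ (M.map (algebraMap ℝ ℂ))) : μ.re = 0 := by
  have hH : (Complex.I • M.map (algebraMap ℝ ℂ)).IsHermitian := by
    ext i j
    have hij := congr_fun (congr_fun hM i) j
    simp only [transpose_apply, neg_apply] at hij
    simp [conjTranspose_apply, hij]
  have hIμ : Complex.I * μ ∈ spectrum ℂ (Complex.I • M.map (algebraMap ℝ ℂ)) :=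
    spectrum.smul_mem_smul_iff (r := Units.mk0 Complex.I Complex.I_ne_zero) |>.mpr hμ
  obtain ⟨r, -, hr⟩ := hH.spectrum_eq_image_range ▸ hIμ
  simpa using (congr_arg Complex.im hr).symm

theorem aeval_mul_eq_mul_aeval {R : Type*} [CommSemiring R] {A : Matrix n n R} {N : Matrix m m R}
    {X : Matrix n m R} (h : A * X = X * N) (q : R[X]) : aeval A q * X = X * aeval N q := by
  induction q using Polynomial.induction_on' with
  | add p q hp hq => rw [map_add, map_add, Matrix.add_mul, Matrix.mul_add, hp, hq]
  | monomial k a =>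
    have hpow : A ^ k * X = X * N ^ k := by
      induction k with
      | zero => simp
      | succ k ih => rw [pow_succ, pow_succ, Matrix.mul_assoc, h, ← Matrix.mul_assoc, ih,
          Matrix.mul_assoc]
    simp only [aeval_monomial, Algebra.algebraMap_eq_smul_one, Matrix.smul_mul, Matrix.mul_smul,
      Matrix.one_mul, hpow]

theorem eq_zero_of_mul_eq_mul_of_disjoint_spectrum {K : Type*} [Field K] [IsAlgClosed K]
    {A : Matrix n n K} {N : Matrix m m K} {X : Matrix n m K}
    (hAN : Disjoint (spectrum K A) (spectrum K N)) (h : A * X = X * N) : X = 0 := by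
  cases isEmpty_or_nonempty m
  · exact Subsingleton.elim _ _
  have hdeg : 0 < N.charpoly.degree := by
    rw [← natDegree_pos_iff_degree_pos, charpoly_natDegree_eq_dim]
    exact Fintype.card_pos
  have hunit : IsUnit (aeval A N.charpoly) := by
    rw [← spectrum.zero_notMem_iff K, spectrum.map_polynomial_aeval_of_degree_pos A _ hdeg]
    rintro ⟨μ, hμA, hμN⟩
    exact hAN.notMem_of_mem_left hμA (mem_spectrum_of_isRoot_charpoly hμN)
  have hX : aeval A N.charpoly * X = 0 := by
    rw [aeval_mul_eq_mul_aeval h, aeval_self_charpoly, Matrix.mul_zero]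
  rw [← nonsing_inv_mul_cancel_left _ X ((isUnit_iff_isUnit_det _).mp hunit), hX, Matrix.mul_zero]

theorem isUnit_one_kronecker_sub_kronecker_one {K L : Type*} [Field K] [Field L] [IsAlgClosed L]
    [Algebra K L] {A : Matrix n n K} {N : Matrix m m K}
    (h : Disjoint (spectrum L (A.map (algebraMap K L))) (spectrum L (Nᵀ.map (algebraMap K L)))) :
    IsUnit ((1 : Matrix m m K) ⊗ₖ A - N ⊗ₖ (1 : Matrix n n K)) := by
  rw [isUnit_iff_isUnit_det, isUnit_iff_ne_zero]
  intro hdet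
  obtain ⟨v, hv, hKv⟩ := exists_mulVec_eq_zero_iff.mpr hdet
  obtain ⟨X, rfl⟩ := vec_bijective.surjective v
  have hAX : A * X = X * Nᵀ := by
    rw [sub_mulVec, kronecker_mulVec_vec, kronecker_mulVec_vec, sub_eq_zero, vec_inj] at hKv
    simpa using hKv
  have hX : X.map (algebraMap K L) = 0 :=
    eq_zero_of_mul_eq_mul_of_disjoint_spectrum h (by rw [← Matrix.map_mul, ← Matrix.map_mul, hAX])
  apply hv
  rw [← vec_zero, vec_inj]
  ext x k
  simpa using congr_fun (congr_fun hX x) k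

theorem isUnit_one_kronecker_sub_kronecker_one_of_transpose_eq_neg {A : Matrix n n ℝ}
    (hA : ∀ μ ∈ spectrum ℂ (A.map (algebraMap ℝ ℂ)), μ.re ≠ 0) {M : Matrix m m ℝ}
    (hM : Mᵀ = -M) : IsUnit ((1 : Matrix m m ℝ) ⊗ₖ A - M ⊗ₖ (1 : Matrix n n ℝ)) := by
  have hMt : Mᵀᵀ = -Mᵀ := by rw [transpose_transpose, hM, neg_neg]
  exact isUnit_one_kronecker_sub_kronecker_one (L := ℂ) <| Set.disjoint_left.mpr fun μ hμA hμM =>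
    hA μ hμA (re_eq_zero_of_mem_spectrum_of_transpose_eq_neg hMt hμM)

end Matrix

theorem stmt18_general {n m : ℕ} (A B : Matrix (Fin n) (Fin n) ℝ)
    (hreg : ∀ μ ∈ spectrum ℂ (A.map (algebraMap ℝ ℂ)),
      ∀ ν ∈ spectrum ℂ (A.map (algebraMap ℝ ℂ)), μ + starRingEnd ℂ ν ≠ 0)
    (M : Matrix (Fin m) (Fin m) ℝ) (hM : Mᵀ = -M)
    (ℓrow : Matrix (Fin 1) (Fin m) ℝ)
    (P : Matrix (Fin m) (Fin m) ℝ)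
    (bC : Matrix (Fin m × Fin n) (Fin n) ℝ)
    (hS : ∀ R : Matrix (Fin n) (Fin n) ℝ,
      ((Matrix.fromBlocks (0 : Matrix (Fin 1) (Fin 1) ℝ) ℓrow (-ℓrowᵀ) (-M)) ⊗ₖ
          (1 : Matrix (Fin n) (Fin n) ℝ)) *
        (Matrix.of fun (p : (Fin 1 ⊕ Fin m) × Fin n) (j : Fin n) =>
          Sum.elim (fun _ => R p.2 j) (fun k => ((P ⊗ₖ R) * bC) (k, p.2) j) p.1) =
      (Matrix.of fun (p : (Fin 1 ⊕ Fin m) × Fin n) (j : Fin n) =>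
        Sum.elim (fun _ => (R * B) p.2 j)
          (fun k => (-((P ⊗ₖ (R * A)) * bC)) (k, p.2) j) p.1)) :
    ∀ x y : Fin n, B x y =
      ((ℓrow ⊗ₖ (1 : Matrix (Fin n) (Fin n) ℝ)) *
        ((1 : Matrix (Fin m) (Fin m) ℝ) ⊗ₖ A - M ⊗ₖ (1 : Matrix (Fin n) (Fin n) ℝ))⁻¹ *
        (ℓrowᵀ ⊗ₖ (1 : Matrix (Fin n) (Fin n) ℝ))) (0, x) (0, y) := by
  set K := (1 : Matrix (Fin m) (Fin m) ℝ) ⊗ₖ A - M ⊗ₖ (1 : Matrix (Fin n) (Fin n) ℝ)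
  have hK : IsUnit K := isUnit_one_kronecker_sub_kronecker_one_of_transpose_eq_neg
    (fun μ hμ hre => hreg μ hμ μ hμ (by simp [Complex.add_conj, hre])) hM
  have h1 := hS 1
  set D := P ⊗ₖ (1 : Matrix (Fin n) (Fin n) ℝ) * bC
  have htop (x y : Fin n) : ∑ k, ℓrow 0 k * D (k, x) y = B x y := by
    simpa [kronecker_one_mul_apply, Fintype.sum_sum_type]
      using congr_fun (congr_fun h1 (Sum.inl 0, x)) y
  have hPA : P ⊗ₖ A * bC = (1 : Matrix (Fin m) (Fin m) ℝ) ⊗ₖ A * D := by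
    rw [← Matrix.mul_assoc, ← mul_kronecker_mul, Matrix.one_mul, Matrix.mul_one]
  have hbot (k : Fin m) (x y : Fin n) :
      -ℓrow 0 k * (1 : Matrix (Fin n) (Fin n) ℝ) x y - ∑ j, M k j * D (j, x) y =
        -∑ z, A x z * D (k, z) y := by
    simpa [hPA, kronecker_one_mul_apply, one_kronecker_mul_apply, Fintype.sum_sum_type,
      sub_eq_add_neg] using congr_fun (congr_fun h1 (Sum.inr k, x)) y
  set Dm : Matrix (Fin m × Fin n) (Fin 1 × Fin n) ℝ := of fun p q => D p q.2
  have hℓD : ℓrow ⊗ₖ (1 : Matrix (Fin n) (Fin n) ℝ) * Dm = of fun p q => B p.2 q.2 := by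
    ext ⟨a, x⟩ ⟨b, y⟩
    rw [Subsingleton.elim a 0, kronecker_one_mul_apply]
    exact htop x y
  have hKD : K * Dm = ℓrowᵀ ⊗ₖ (1 : Matrix (Fin n) (Fin n) ℝ) := by
    ext ⟨k, x⟩ ⟨b, y⟩
    rw [Subsingleton.elim b 0]
    simp only [K, Matrix.sub_mul, Matrix.sub_apply, one_kronecker_mul_apply,
      kronecker_one_mul_apply, Dm, of_apply, kroneckerMap_apply, transpose_apply]
    linarith [hbot k x y]
  intro x y
  rw [Matrix.mul_assoc, ← hKD, nonsing_inv_mul_cancel_left _ _ ((isUnit_iff_isUnit_det K).mp hK),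
    hℓD, of_apply]

/-- If the real skew-symmetric matrix `S = [[0, ℓ],[−ℓᵀ, −M]]` satisfies
`(S ⊗ I_n) L_R = M_R` for all real `R`, where `L_R = [R; (P⊗R)C]` and
`M_R = [R B; −(P⊗(R A))C]`, then for `f(z) = ℓ (z I_m − M)⁻¹ ℓᵀ` one has
`f(A) = B`, i.e. `B = (ℓ ⊗ I_n)(I_m ⊗ A − M ⊗ I_n)⁻¹(ℓᵀ ⊗ I_n)`. -/
theorem stmt18 {n m : ℕ} (A B : Matrix (Fin n) (Fin n) ℝ)
    (hreg : ∀ μ ∈ spectrum ℂ (A.map (algebraMap ℝ ℂ)),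
      ∀ ν ∈ spectrum ℂ (A.map (algebraMap ℝ ℂ)), μ + starRingEnd ℂ ν ≠ 0)
    (M : Matrix (Fin m) (Fin m) ℝ) (hM : Mᵀ = -M)
    (ℓrow : Matrix (Fin 1) (Fin m) ℝ)
    (P : Matrix (Fin m) (Fin m) ℝ) (hP : IsUnit P)
    (bC : Matrix (Fin m × Fin n) (Fin n) ℝ)
    (hS : ∀ R : Matrix (Fin n) (Fin n) ℝ,
      ((Matrix.fromBlocks (0 : Matrix (Fin 1) (Fin 1) ℝ) ℓrow (-ℓrowᵀ) (-M)) ⊗ₖ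
          (1 : Matrix (Fin n) (Fin n) ℝ)) *
        (Matrix.of fun (p : (Fin 1 ⊕ Fin m) × Fin n) (j : Fin n) =>
          Sum.elim (fun _ => R p.2 j) (fun k => ((P ⊗ₖ R) * bC) (k, p.2) j) p.1) =
      (Matrix.of fun (p : (Fin 1 ⊕ Fin m) × Fin n) (j : Fin n) =>
        Sum.elim (fun _ => (R * B) p.2 j)
          (fun k => (-((P ⊗ₖ (R * A)) * bC)) (k, p.2) j) p.1)) :
    ∀ x y : Fin n, B x y =
      ((ℓrow ⊗ₖ (1 : Matrix (Fin n) (Fin n) ℝ)) *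
        ((1 : Matrix (Fin m) (Fin m) ℝ) ⊗ₖ A - M ⊗ₖ (1 : Matrix (Fin n) (Fin n) ℝ))⁻¹ *
        (ℓrowᵀ ⊗ₖ (1 : Matrix (Fin n) (Fin n) ℝ))) (0, x) (0, y) :=
  stmt18_general A B hreg M hM ℓrow P bC hS
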